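/- (Factorization of the electric N_f = 2 index.) Let q, a, v be complex numbers with 0 < |q| < 1, |q| < |a| < 1, v ≠ 0, and suppose that neither v² nor a/v² is an integer power of q. Then Σ_{k∈ℤ} a^{|k|} · [(q^{1+|k|}, q^{1+|k|}v², a, a/v²; q)_∞ / (v^{−2}, q^{1+|k|}/a, q^{1+|k|}v²/a, q; q)_∞] · Σ_{n=0}^∞ [(q^{1+|k|}/a, q^{1+|k|}v²/a, q/a, qv²/a; q)_n / (q^{1+|k|}, q^{1+|k|}v², qv², q; q)_n] a^{2n} = (qv², a, a/v²; q)_∞ / (v^{−2}, q/a, qv²/a; q)_∞ · [₂φ₁(qv²/a, q/a; qv²; q, a)]². -/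

import Mathlib

open scoped BigOperators

/-- The infinite q-Pochhammer symbol `(z;q)_∞ = ∏_{j=0}^∞ (1 - z q^j)`. -/
noncomputable def qPochInf (z q : ℂ) : ℂ := ∏' j : ℕ, (1 - z * q ^ j)

/-- The q-Pochhammer symbol `(z;q)_n = (z;q)_∞ / (z q^n;q)_∞` for `n : ℤ`. -/
noncomputable def qPochInt (z q : ℂ) (n : ℤ) : ℂ :=
  qPochInf z q / qPochInf (z * q ^ n) q

/-- The basic hypergeometric series `₂φ₁(A,B;C;q,Z)`. -/
noncomputable def phi21 (A B C q Z : ℂ) : ℂ :=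
  ∑' n : ℕ, (qPochInt A q n * qPochInt B q n) /
    (qPochInt q q n * qPochInt C q n) * Z ^ n

/-! Let `u n` be the `n`-th term of `₂φ₁(q v²/a, q/a; q v²; q, a)` and `P` the prefactor on the
right-hand side. Splitting `(X;q)_{K+j} = (X;q)_K (X q^K;q)_j` and using
`(X;q)_K = (X;q)_∞ / (X q^K;q)_∞` to absorb the infinite products, the `j`-th term of the `k`-th
summand of the index is `P · u (j + |k|) · u j`. Summing over `k` therefore runs through the
diagonals `n - m = k` of `ℕ × ℕ`, which rearranges the absolutely convergent double series
`P · ∑ₙ ∑ₘ u n · u m = P · (∑ₙ u n)²`; absolute convergence is the ratio test, as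
`u (n+1) / u n → a`. -/

open Filter Topology Finset

section QPochhammer

variable {q : ℂ}

lemma summable_norm_neg_mul_pow (hq : ‖q‖ < 1) (z : ℂ) :
    Summable fun j : ℕ => ‖-(z * q ^ j)‖ := by
  simpa [norm_mul, norm_pow] using (summable_geometric_of_lt_one (norm_nonneg q) hq).mul_left ‖z‖

lemma multipliable_one_sub_mul_pow (hq : ‖q‖ < 1) (z : ℂ) :
    Multipliable fun j : ℕ => 1 - z * q ^ j := by
  simpa only [sub_eq_add_neg] using
    multipliable_one_add_of_summable (summable_norm_neg_mul_pow hq z)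

lemma qPochInf_ne_zero (hq : ‖q‖ < 1) {z : ℂ} (hz : ∀ j : ℕ, z * q ^ j ≠ 1) :
    qPochInf z q ≠ 0 := by
  simpa only [qPochInf, sub_eq_add_neg] using tprod_one_add_ne_zero_of_summable
    (fun j => by simpa [← sub_eq_add_neg, sub_eq_zero] using (hz j).symm)
    (summable_norm_neg_mul_pow hq z)

lemma mul_pow_ne_one_of_norm_lt_one {z : ℂ} (hz : ‖z‖ < 1) (hq : ‖q‖ ≤ 1) (j : ℕ) :
    z * q ^ j ≠ 1 := by
  intro h
  have := congrArg norm h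
  rw [norm_mul, norm_pow, norm_one] at this
  nlinarith [pow_le_one₀ (n := j) (norm_nonneg q) hq, norm_nonneg z, pow_nonneg (norm_nonneg q) j]

lemma qPochInf_eq_prod_mul (hq : ‖q‖ < 1) (z : ℂ) (n : ℕ) :
    qPochInf z q = (∏ j ∈ range n, (1 - z * q ^ j)) * qPochInf (z * q ^ n) q := by
  have htail : Multipliable fun j : ℕ => 1 - z * q ^ (j + n) :=
    (multipliable_one_sub_mul_pow hq (z * q ^ n)).congr fun j => by ring
  unfold qPochInf
  rw [← Multipliable.prod_mul_tprod_nat_mul' (f := fun j => 1 - z * q ^ j) htail]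
  congr 2 with j
  ring

lemma qPochInt_natCast (hq : ‖q‖ < 1) {z : ℂ} (hz : ∀ j : ℕ, z * q ^ j ≠ 1) (n : ℕ) :
    qPochInt z q n = ∏ j ∈ range n, (1 - z * q ^ j) := by
  have hzn : qPochInf (z * q ^ n) q ≠ 0 :=
    qPochInf_ne_zero hq fun j => by rw [mul_assoc, ← pow_add]; exact hz (n + j)
  rw [qPochInt, zpow_natCast, qPochInf_eq_prod_mul hq z n, mul_div_cancel_right₀ _ hzn]

lemma qPochInt_natCast_succ (hq : ‖q‖ < 1) {z : ℂ} (hz : ∀ j : ℕ, z * q ^ j ≠ 1) (n : ℕ) :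
    qPochInt z q (n + 1 : ℕ) = qPochInt z q n * (1 - z * q ^ n) := by
  simp only [qPochInt_natCast hq hz, prod_range_succ]

lemma qPochInt_natCast_add (hq : ‖q‖ < 1) {z : ℂ} (hz : ∀ j : ℕ, z * q ^ j ≠ 1) (m n : ℕ) :
    qPochInt z q (m + n : ℕ) = qPochInt z q m * qPochInt (z * q ^ m) q n := by
  have hzm : ∀ j : ℕ, z * q ^ m * q ^ j ≠ 1 := fun j => by
    rw [mul_assoc, ← pow_add]; exact hz (m + j)
  simp only [qPochInt_natCast hq hz, qPochInt_natCast hq hzm, prod_range_add, pow_add, mul_assoc]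

end QPochhammer

section Phi21

variable {A B C q Z : ℂ}

noncomputable def phi21Term (A B C q Z : ℂ) (n : ℕ) : ℂ :=
  qPochInt A q n * qPochInt B q n / (qPochInt q q n * qPochInt C q n) * Z ^ n

lemma phi21Term_succ (hq : ‖q‖ < 1) (hA : ∀ j : ℕ, A * q ^ j ≠ 1)
    (hB : ∀ j : ℕ, B * q ^ j ≠ 1) (hC : ∀ j : ℕ, C * q ^ j ≠ 1) (n : ℕ) :
    phi21Term A B C q Z (n + 1) = phi21Term A B C q Z n *
      (Z * ((1 - A * q ^ n) * (1 - B * q ^ n) / ((1 - q * q ^ n) * (1 - C * q ^ n)))) := by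
  have hqq := mul_pow_ne_one_of_norm_lt_one hq hq.le
  simp only [phi21Term, qPochInt_natCast_succ hq hA, qPochInt_natCast_succ hq hB,
    qPochInt_natCast_succ hq hqq, qPochInt_natCast_succ hq hC]
  generalize 1 - A * q ^ n = a, 1 - B * q ^ n = b, 1 - q * q ^ n = c, 1 - C * q ^ n = d
  ring

lemma summable_norm_phi21Term (hq : ‖q‖ < 1) (hA : ∀ j : ℕ, A * q ^ j ≠ 1)
    (hB : ∀ j : ℕ, B * q ^ j ≠ 1) (hC : ∀ j : ℕ, C * q ^ j ≠ 1) (hZ : ‖Z‖ < 1) :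
    Summable fun n => ‖phi21Term A B C q Z n‖ := by
  set ratio : ℕ → ℂ := fun n =>
    Z * ((1 - A * q ^ n) * (1 - B * q ^ n) / ((1 - q * q ^ n) * (1 - C * q ^ n)))
  have hratio : Tendsto ratio atTop (𝓝 Z) := by
    have hcont : ContinuousAt
        (fun w : ℂ => Z * ((1 - A * w) * (1 - B * w) / ((1 - q * w) * (1 - C * w)))) 0 := by
      fun_prop (disch := norm_num)
    have h := hcont.tendsto.comp (tendsto_pow_atTop_nhds_zero_of_norm_lt_one hq)
    simp only [mul_zero, sub_zero, mul_one, div_one] at h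
    exact h
  have hsmall : ∀ᶠ n in atTop, ‖ratio n‖ ≤ (1 + ‖Z‖) / 2 :=
    hratio.norm.eventually (ge_mem_nhds (by linarith))
  refine summable_of_ratio_norm_eventually_le (r := (1 + ‖Z‖) / 2) (by linarith) ?_
  filter_upwards [hsmall] with n hn
  rw [norm_norm, norm_norm, phi21Term_succ hq hA hB hC, norm_mul, mul_comm]
  exact mul_le_mul_of_nonneg_right hn (norm_nonneg _)

lemma phi21Term_add (hq : ‖q‖ < 1) (hA : ∀ j : ℕ, A * q ^ j ≠ 1)
    (hB : ∀ j : ℕ, B * q ^ j ≠ 1) (hC : ∀ j : ℕ, C * q ^ j ≠ 1) (m n : ℕ) :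
    phi21Term A B C q Z (m + n) = phi21Term A B C q Z m *
      (qPochInt (A * q ^ m) q n * qPochInt (B * q ^ m) q n /
        (qPochInt (q * q ^ m) q n * qPochInt (C * q ^ m) q n) * Z ^ n) := by
  have hqq := mul_pow_ne_one_of_norm_lt_one hq hq.le
  simp only [phi21Term, qPochInt_natCast_add hq hA, qPochInt_natCast_add hq hB,
    qPochInt_natCast_add hq hqq, qPochInt_natCast_add hq hC, pow_add]
  ring

end Phi21

section Diagonals

/-- `(k, j)` is sent to the `j`-th point on the diagonal `n - m = k` of `ℕ × ℕ`. -/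
def diagonalEquiv : ℤ × ℕ ≃ ℕ × ℕ where
  toFun p := (p.2 + p.1.toNat, p.2 + (-p.1).toNat)
  invFun p := ((p.1 : ℤ) - p.2, min p.1 p.2)
  left_inv := by rintro ⟨k, j⟩; simp only [Prod.mk.injEq]; omega
  right_inv := by rintro ⟨n, m⟩; simp only [Prod.mk.injEq]; omega

lemma mul_diagonalEquiv_apply {M : Type*} [CommMagma M] (u : ℕ → M) (k : ℤ) (j : ℕ) :
    u (diagonalEquiv (k, j)).1 * u (diagonalEquiv (k, j)).2 = u (j + k.natAbs) * u j := by
  rcases le_or_gt 0 k with hk | hk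
  · simp [diagonalEquiv, show k.toNat = k.natAbs by omega, show (-k).toNat = 0 by omega]
  · simp [diagonalEquiv, show k.toNat = 0 by omega, show (-k).toNat = k.natAbs by omega,
      mul_comm]

lemma tsum_sq_eq_tsum_tsum_natAbs {R : Type*} [NormedCommRing R] [CompleteSpace R] {u : ℕ → R}
    (hu : Summable fun n => ‖u n‖) :
    (∑' n, u n) ^ 2 = ∑' k : ℤ, ∑' j : ℕ, u (j + k.natAbs) * u j := by
  set f : ℕ × ℕ → R := fun p => u p.1 * u p.2
  have hf : Summable (f ∘ diagonalEquiv) :=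
    diagonalEquiv.summable_iff.mpr (summable_mul_of_summable_norm hu hu)
  calc (∑' n, u n) ^ 2 = ∑' p : ℕ × ℕ, f p := by
        rw [sq, tsum_mul_tsum_of_summable_norm hu hu]
    _ = ∑' p : ℤ × ℕ, f (diagonalEquiv p) := (diagonalEquiv.tsum_eq f).symm
    _ = ∑' k : ℤ, ∑' j : ℕ, f (diagonalEquiv (k, j)) := hf.tsum_prod' fun k => hf.prod_factor k
    _ = ∑' k : ℤ, ∑' j : ℕ, u (j + k.natAbs) * u j :=
        tsum_congr fun k => tsum_congr fun j => mul_diagonalEquiv_apply u k j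

end Diagonals

section ElectricIndex

variable {q a v : ℂ}

noncomputable def electricPrefactor (q a v : ℂ) : ℂ :=
  (qPochInf (q * v ^ 2) q * qPochInf a q * qPochInf (a / v ^ 2) q) /
    (qPochInf (v ^ (-2 : ℤ)) q * qPochInf (q / a) q * qPochInf (q * v ^ 2 / a) q)

lemma electricPrefactor_mul_phi21Term (hq : ‖q‖ < 1) (hA : ∀ j : ℕ, q * v ^ 2 / a * q ^ j ≠ 1)
    (hB : ∀ j : ℕ, q / a * q ^ j ≠ 1) (hC : ∀ j : ℕ, q * v ^ 2 * q ^ j ≠ 1) (K : ℕ) :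
    electricPrefactor q a v * phi21Term (q * v ^ 2 / a) (q / a) (q * v ^ 2) q a K =
      a ^ K * ((qPochInf (q * q ^ K) q * qPochInf (q * v ^ 2 * q ^ K) q *
        qPochInf a q * qPochInf (a / v ^ 2) q) /
       (qPochInf (v ^ (-2 : ℤ)) q * qPochInf (q / a * q ^ K) q *
        qPochInf (q * v ^ 2 / a * q ^ K) q * qPochInf q q)) := by
  have hIA := qPochInf_ne_zero hq hA
  have hIB := qPochInf_ne_zero hq hB
  have hIC := qPochInf_ne_zero hq hC
  simp only [electricPrefactor, phi21Term, qPochInt, zpow_natCast]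
  field_simp

lemma electric_summand_eq (hq : ‖q‖ < 1) (hA : ∀ j : ℕ, q * v ^ 2 / a * q ^ j ≠ 1)
    (hB : ∀ j : ℕ, q / a * q ^ j ≠ 1) (hC : ∀ j : ℕ, q * v ^ 2 * q ^ j ≠ 1) (k : ℤ) :
    a ^ |k| *
      ((qPochInf (q ^ (1 + |k|)) q * qPochInf (q ^ (1 + |k|) * v ^ 2) q *
        qPochInf a q * qPochInf (a / v ^ 2) q) /
       (qPochInf (v ^ (-2 : ℤ)) q * qPochInf (q ^ (1 + |k|) / a) q *
        qPochInf (q ^ (1 + |k|) * v ^ 2 / a) q * qPochInf q q)) *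
      ∑' n : ℕ,
        (qPochInt (q ^ (1 + |k|) / a) q n * qPochInt (q ^ (1 + |k|) * v ^ 2 / a) q n *
         qPochInt (q / a) q n * qPochInt (q * v ^ 2 / a) q n) /
        (qPochInt (q ^ (1 + |k|)) q n * qPochInt (q ^ (1 + |k|) * v ^ 2) q n *
         qPochInt (q * v ^ 2) q n * qPochInt q q n) * a ^ (2 * n)
    = electricPrefactor q a v * ∑' j : ℕ,
        phi21Term (q * v ^ 2 / a) (q / a) (q * v ^ 2) q a (j + k.natAbs) *
          phi21Term (q * v ^ 2 / a) (q / a) (q * v ^ 2) q a j := by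
  rw [Int.abs_eq_natAbs]
  generalize k.natAbs = K
  have hqK : q ^ (1 + (K : ℤ)) = q * q ^ K := by
    rw [← Nat.cast_one, ← Nat.cast_add, zpow_natCast, pow_add, pow_one]
  rw [hqK, zpow_natCast, show q * q ^ K / a = q / a * q ^ K by ring,
    show q * q ^ K * v ^ 2 / a = q * v ^ 2 / a * q ^ K by ring,
    show q * q ^ K * v ^ 2 = q * v ^ 2 * q ^ K by ring,
    ← electricPrefactor_mul_phi21Term hq hA hB hC, ← tsum_mul_left, ← tsum_mul_left]
  refine tsum_congr fun j => ?_
  rw [add_comm j K, phi21Term_add hq hA hB hC]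
  simp only [phi21Term]
  ring

end ElectricIndex

theorem electric_index_factorization_Nf2_general (q a v : ℂ)
    (hq1 : ‖q‖ < 1)
    (hqa : ‖q‖ < ‖a‖) (ha : ‖a‖ < 1)
    (hv2 : ∀ m : ℤ, v ^ 2 ≠ q ^ m)
    (hav2 : ∀ m : ℤ, a / v ^ 2 ≠ q ^ m) :
    (∑' k : ℤ, a ^ |k| *
      ((qPochInf (q ^ (1 + |k|)) q * qPochInf (q ^ (1 + |k|) * v ^ 2) q *
        qPochInf a q * qPochInf (a / v ^ 2) q) /
       (qPochInf (v ^ (-2 : ℤ)) q * qPochInf (q ^ (1 + |k|) / a) q *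
        qPochInf (q ^ (1 + |k|) * v ^ 2 / a) q * qPochInf q q)) *
      ∑' n : ℕ,
        (qPochInt (q ^ (1 + |k|) / a) q n * qPochInt (q ^ (1 + |k|) * v ^ 2 / a) q n *
         qPochInt (q / a) q n * qPochInt (q * v ^ 2 / a) q n) /
        (qPochInt (q ^ (1 + |k|)) q n * qPochInt (q ^ (1 + |k|) * v ^ 2) q n *
         qPochInt (q * v ^ 2) q n * qPochInt q q n) * a ^ (2 * n))
    = (qPochInf (q * v ^ 2) q * qPochInf a q * qPochInf (a / v ^ 2) q) /
      (qPochInf (v ^ (-2 : ℤ)) q * qPochInf (q / a) q * qPochInf (q * v ^ 2 / a) q) *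
      phi21 (q * v ^ 2 / a) (q / a) (q * v ^ 2) q a ^ 2 := by
  have hB : ∀ j : ℕ, q / a * q ^ j ≠ 1 := mul_pow_ne_one_of_norm_lt_one
    (by rw [norm_div]; exact (div_lt_one ((norm_nonneg q).trans_lt hqa)).mpr hqa) hq1.le
  have hC : ∀ j : ℕ, q * v ^ 2 * q ^ j ≠ 1 := fun j h => hv2 (-(j + 1 : ℕ)) <| by
    rw [zpow_neg, zpow_natCast]
    exact eq_inv_of_mul_eq_one_left (by rw [← h]; ring)
  have hA : ∀ j : ℕ, q * v ^ 2 / a * q ^ j ≠ 1 := fun j h => hav2 (j + 1 : ℕ) <| by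
    have ha0 : a ≠ 0 := by rintro rfl; simp at h
    rw [div_mul_eq_mul_div, div_eq_one_iff_eq ha0] at h
    have hv : v ^ 2 ≠ 0 := by rintro hv; simp [hv, ha0.symm] at h
    rw [zpow_natCast, div_eq_iff hv]
    linear_combination -h
  calc _ = ∑' k : ℤ, electricPrefactor q a v * ∑' j : ℕ,
        phi21Term (q * v ^ 2 / a) (q / a) (q * v ^ 2) q a (j + k.natAbs) *
          phi21Term (q * v ^ 2 / a) (q / a) (q * v ^ 2) q a j :=
        tsum_congr (electric_summand_eq hq1 hA hB hC)
    _ = _ := by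
      rw [tsum_mul_left, ← tsum_sq_eq_tsum_tsum_natAbs (summable_norm_phi21Term hq1 hA hB hC ha)]
      rfl

theorem electric_index_factorization_Nf2 (q a v : ℂ)
    (hq0 : 0 < ‖q‖) (hq1 : ‖q‖ < 1)
    (hqa : ‖q‖ < ‖a‖) (ha : ‖a‖ < 1)
    (hv : v ≠ 0)
    (hv2 : ∀ m : ℤ, v ^ 2 ≠ q ^ m)
    (hav2 : ∀ m : ℤ, a / v ^ 2 ≠ q ^ m) :
    (∑' k : ℤ, a ^ |k| *
      ((qPochInf (q ^ (1 + |k|)) q * qPochInf (q ^ (1 + |k|) * v ^ 2) q *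
        qPochInf a q * qPochInf (a / v ^ 2) q) /
       (qPochInf (v ^ (-2 : ℤ)) q * qPochInf (q ^ (1 + |k|) / a) q *
        qPochInf (q ^ (1 + |k|) * v ^ 2 / a) q * qPochInf q q)) *
      ∑' n : ℕ,
        (qPochInt (q ^ (1 + |k|) / a) q n * qPochInt (q ^ (1 + |k|) * v ^ 2 / a) q n *
         qPochInt (q / a) q n * qPochInt (q * v ^ 2 / a) q n) /
        (qPochInt (q ^ (1 + |k|)) q n * qPochInt (q ^ (1 + |k|) * v ^ 2) q n *
         qPochInt (q * v ^ 2) q n * qPochInt q q n) * a ^ (2 * n))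
    = (qPochInf (q * v ^ 2) q * qPochInf a q * qPochInf (a / v ^ 2) q) /
      (qPochInf (v ^ (-2 : ℤ)) q * qPochInf (q / a) q * qPochInf (q * v ^ 2 / a) q) *
      phi21 (q * v ^ 2 / a) (q / a) (q * v ^ 2) q a ^ 2 :=
  electric_index_factorization_Nf2_general q a v hq1 hqa ha hv2 hav2
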